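/- arXiv:2412.09943 — 2 statements merged into one kernel-verified Lean document; each statement's English description precedes it below -/
import Mathlib

section
/- Let u, B, S be smooth fields with ρ > 0 satisfying the continuity and induction equations as above, and suppose DₜS = 0 (the entropy is transported). Then Dₜ((ρ⁻¹B·∇)S) = 0, i.e., the directional derivative of the entropy along ρ⁻¹B is also transported by the flow. -/
noncomputable section

def pt (f : ℝ → (Fin 3 → ℝ) → ℝ) (t : ℝ) (x : Fin 3 → ℝ) : ℝ :=
  deriv (fun s => f s x) t

def pd (i : Fin 3) (f : ℝ → (Fin 3 → ℝ) → ℝ) (t : ℝ) (x : Fin 3 → ℝ) : ℝ :=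
  fderiv ℝ (fun y => f t y) x (Pi.single i 1)

/-- material derivative Dₜ = ∂ₜ + u·∇ -/
def Dt (u : ℝ → (Fin 3 → ℝ) → Fin 3 → ℝ) (f : ℝ → (Fin 3 → ℝ) → ℝ) :
    ℝ → (Fin 3 → ℝ) → ℝ :=
  fun t x => pt f t x + ∑ k, u t x k * pd k f t x

open Function

lemma pt_eq (f : ℝ → (Fin 3 → ℝ) → ℝ) (t : ℝ) (x : Fin 3 → ℝ)
    (hf : DifferentiableAt ℝ (uncurry f) (t, x)) :
    pt f t x = fderiv ℝ (uncurry f) (t, x) (1, 0) := by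
  have h2 : HasDerivAt (fun s : ℝ => (s, x)) ((1 : ℝ), (0 : Fin 3 → ℝ)) t :=
    (hasDerivAt_id t).prodMk (hasDerivAt_const t x)
  have h := hf.hasFDerivAt.comp_hasDerivAt t h2
  simpa [pt, Function.comp_def, uncurry] using h.deriv

lemma pd_eq (i : Fin 3) (f : ℝ → (Fin 3 → ℝ) → ℝ) (t : ℝ) (x : Fin 3 → ℝ)
    (hf : DifferentiableAt ℝ (uncurry f) (t, x)) :
    pd i f t x = fderiv ℝ (uncurry f) (t, x) (0, Pi.single i 1) := by
  have h2 : HasFDerivAt (fun y : Fin 3 → ℝ => ((t : ℝ), y))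
      (((0 : (Fin 3 → ℝ) →L[ℝ] ℝ)).prod (ContinuousLinearMap.id ℝ (Fin 3 → ℝ))) x :=
    (hasFDerivAt_const t x).prodMk (hasFDerivAt_id x)
  have h := hf.hasFDerivAt.comp x h2
  have h3 : fderiv ℝ (fun y => f t y) x =
      (fderiv ℝ (uncurry f) (t, x)).comp
        (((0 : (Fin 3 → ℝ) →L[ℝ] ℝ)).prod (ContinuousLinearMap.id ℝ (Fin 3 → ℝ))) :=
    h.fderiv
  rw [pd, h3]
  simp

/-- If the entropy is transported, `DₜS = 0`, then the
directional derivative `(ρ⁻¹B·∇)S` is also transported: `Dₜ((ρ⁻¹B·∇)S) = 0`. -/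
theorem directional_derivative_of_entropy_is_transported
    (u B : ℝ → (Fin 3 → ℝ) → Fin 3 → ℝ) (ρ S : ℝ → (Fin 3 → ℝ) → ℝ)
    (hu : ContDiff ℝ (⊤ : ℕ∞) (Function.uncurry u))
    (hB : ContDiff ℝ (⊤ : ℕ∞) (Function.uncurry B))
    (hρ : ContDiff ℝ (⊤ : ℕ∞) (Function.uncurry ρ))
    (hS : ContDiff ℝ (⊤ : ℕ∞) (Function.uncurry S))
    (hρpos : ∀ t x, 0 < ρ t x)
    (hcont : ∀ t x, pt ρ t x + ∑ k, pd k (fun t x => ρ t x * u t x k) t x = 0)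
    (hind : ∀ i t x,
      pt (fun t x => B t x i) t x + ∑ k, u t x k * pd k (fun t x => B t x i) t x
        = (∑ k, B t x k * pd k (fun t x => u t x i) t x)
          - B t x i * ∑ k, pd k (fun t x => u t x k) t x)
    (hSt : ∀ t x, Dt u S t x = 0) :
    ∀ t x, Dt u (fun t x => ∑ k, (ρ t x)⁻¹ * B t x k * pd k S t x) t x = 0 := by
  intro t x
  classical
  -- basic differentiability facts
  have hSd : Differentiable ℝ (uncurry S) := hS.differentiable (by simp)
  have hρd : Differentiable ℝ (uncurry ρ) := hρ.differentiable (by simp)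
  have hcu : ∀ k, ContDiff ℝ (⊤ : ℕ∞) (uncurry fun a b => u a b k) := fun k =>
    (ContinuousLinearMap.proj (R := ℝ) (φ := fun _ : Fin 3 => ℝ) k).contDiff.comp hu
  have hcb : ∀ k, ContDiff ℝ (⊤ : ℕ∞) (uncurry fun a b => B a b k) := fun k =>
    (ContinuousLinearMap.proj (R := ℝ) (φ := fun _ : Fin 3 => ℝ) k).contDiff.comp hB
  have hud : ∀ k, Differentiable ℝ (uncurry fun a b => u a b k) := fun k =>
    (hcu k).differentiable (by simp)
  have hbd : ∀ k, Differentiable ℝ (uncurry fun a b => B a b k) := fun k =>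
    (hcb k).differentiable (by simp)
  have hF1 : ContDiff ℝ (⊤ : ℕ∞) (fderiv ℝ (uncurry S)) := hS.fderiv_right (by simp)
  have hF1d : Differentiable ℝ (fderiv ℝ (uncurry S)) := hF1.differentiable (by simp)
  have hρne : ∀ q : ℝ × (Fin 3 → ℝ), (uncurry ρ) q ≠ 0 := fun q => (hρpos q.1 q.2).ne'
  -- symmetry of the second derivative of S
  have hsym : ∀ v w, fderiv ℝ (fderiv ℝ (uncurry S)) (t, x) v w
      = fderiv ℝ (fderiv ℝ (uncurry S)) (t, x) w v :=
    second_derivative_symmetric (fun y => (hSd y).hasFDerivAt) ((hF1d (t, x)).hasFDerivAt)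
  -- continuity equation, rewritten
  have hXρ : fderiv ℝ (uncurry ρ) (t, x) (1, 0)
      + ∑ k, u t x k * fderiv ℝ (uncurry ρ) (t, x) (0, Pi.single k 1)
      = -(ρ t x * ∑ k : Fin 3,
          fderiv ℝ (uncurry fun a b => u a b k) (t, x) (0, Pi.single k 1)) := by
    have h := hcont t x
    rw [pt_eq ρ t x (hρd _)] at h
    have hpd : ∀ k : Fin 3, pd k (fun t x => ρ t x * u t x k) t x
        = fderiv ℝ (uncurry ρ) (t, x) (0, Pi.single k 1) * u t x k
          + ρ t x * fderiv ℝ (uncurry fun a b => u a b k) (t, x) (0, Pi.single k 1) := by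
      intro k
      have hm := ((hρd ((t, x) : ℝ × (Fin 3 → ℝ))).hasFDerivAt.mul
        ((hud k) (t, x)).hasFDerivAt)
      rw [pd_eq k (fun t x => ρ t x * u t x k) t x (by exact (hρd (t, x)).mul ((hud k) (t, x)))]
      have hf : fderiv ℝ (uncurry fun t x => ρ t x * u t x k) (t, x)
          = (ρ t x) • fderiv ℝ (uncurry fun a b => u a b k) (t, x)
            + (u t x k) • fderiv ℝ (uncurry ρ) (t, x) := hm.fderiv
      rw [hf]
      simp [smul_eq_mul]
      ring
    simp only [hpd] at h
    simp only [Fin.sum_univ_three] at h ⊢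
    linear_combination h
  -- induction equation, rewritten
  have hXB : ∀ m : Fin 3,
      fderiv ℝ (uncurry fun a b => B a b m) (t, x) (1, 0)
        + ∑ k, u t x k * fderiv ℝ (uncurry fun a b => B a b m) (t, x) (0, Pi.single k 1)
      = (∑ k, B t x k * fderiv ℝ (uncurry fun a b => u a b m) (t, x) (0, Pi.single k 1))
        - B t x m * ∑ k : Fin 3,
            fderiv ℝ (uncurry fun a b => u a b k) (t, x) (0, Pi.single k 1) := by
    intro m
    have h := hind m t x
    rw [pt_eq (fun t x => B t x m) t x ((hbd m) (t, x))] at h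
    have hpdB : ∀ k : Fin 3, pd k (fun t x => B t x m) t x
        = fderiv ℝ (uncurry fun a b => B a b m) (t, x) (0, Pi.single k 1) :=
      fun k => pd_eq k _ t x ((hbd m) (t, x))
    have hpdu : ∀ j k : Fin 3, pd k (fun t x => u t x j) t x
        = fderiv ℝ (uncurry fun a b => u a b j) (t, x) (0, Pi.single k 1) :=
      fun j k => pd_eq k _ t x ((hud j) (t, x))
    simp only [hpdB, hpdu] at h
    exact h
  -- the transported-entropy identity, as an identity of functions
  have hGzero : ∀ q : ℝ × (Fin 3 → ℝ),
      fderiv ℝ (uncurry S) q (1, 0)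
        + ∑ k, u q.1 q.2 k * fderiv ℝ (uncurry S) q (0, Pi.single k 1) = 0 := by
    rintro ⟨a, b⟩
    have h := hSt a b
    rw [Dt, pt_eq S a b (hSd _)] at h
    have hpdS : ∀ k : Fin 3, pd k S a b
        = fderiv ℝ (uncurry S) (a, b) (0, Pi.single k 1) :=
      fun k => pd_eq k S a b (hSd _)
    simp only [hpdS] at h
    exact h
  -- derivative of `q ↦ fderiv S q w`
  have hclm : ∀ w : ℝ × (Fin 3 → ℝ),
      HasFDerivAt (fun q : ℝ × (Fin 3 → ℝ) => fderiv ℝ (uncurry S) q w)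
        ((fderiv ℝ (fderiv ℝ (uncurry S)) (t, x)).flip w) (t, x) := by
    intro w
    have h := (hF1d (t, x)).hasFDerivAt.clm_apply
      (hasFDerivAt_const w ((t, x) : ℝ × (Fin 3 → ℝ)))
    simpa using h
  -- derivative of the transported-entropy identity
  have hGder : HasFDerivAt
      (fun q : ℝ × (Fin 3 → ℝ) => fderiv ℝ (uncurry S) q (1, 0)
        + ∑ k, u q.1 q.2 k * fderiv ℝ (uncurry S) q (0, Pi.single k 1))
      ((fderiv ℝ (fderiv ℝ (uncurry S)) (t, x)).flip ((1 : ℝ), (0 : Fin 3 → ℝ))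
        + ∑ k : Fin 3,
          (u t x k • (fderiv ℝ (fderiv ℝ (uncurry S)) (t, x)).flip (0, Pi.single k 1)
            + fderiv ℝ (uncurry S) (t, x) (0, Pi.single k 1) •
              fderiv ℝ (uncurry fun a b => u a b k) (t, x))) (t, x) :=
    (hclm (1, 0)).add (HasFDerivAt.fun_sum fun k _ =>
      (((hud k) (t, x)).hasFDerivAt.mul (hclm (0, Pi.single k 1))))
  have hM : ((fderiv ℝ (fderiv ℝ (uncurry S)) (t, x)).flip ((1 : ℝ), (0 : Fin 3 → ℝ))
        + ∑ k : Fin 3,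
          (u t x k • (fderiv ℝ (fderiv ℝ (uncurry S)) (t, x)).flip (0, Pi.single k 1)
            + fderiv ℝ (uncurry S) (t, x) (0, Pi.single k 1) •
              fderiv ℝ (uncurry fun a b => u a b k) (t, x)))
      = (0 : (ℝ × (Fin 3 → ℝ)) →L[ℝ] ℝ) := by
    have h1 := hGder.fderiv
    rw [show (fun q : ℝ × (Fin 3 → ℝ) => fderiv ℝ (uncurry S) q (1, 0)
        + ∑ k, u q.1 q.2 k * fderiv ℝ (uncurry S) q (0, Pi.single k 1))
      = fun _ => (0 : ℝ) from funext hGzero] at h1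
    rw [← h1, fderiv_fun_const]
    rfl
  have hEnt : ∀ j : Fin 3,
      fderiv ℝ (fderiv ℝ (uncurry S)) (t, x) (0, Pi.single j 1) (1, 0)
        + ∑ k : Fin 3,
          (u t x k * fderiv ℝ (fderiv ℝ (uncurry S)) (t, x) (0, Pi.single j 1) (0, Pi.single k 1)
            + fderiv ℝ (uncurry S) (t, x) (0, Pi.single k 1)
              * fderiv ℝ (uncurry fun a b => u a b k) (t, x) (0, Pi.single j 1)) = 0 := by
    intro j
    have h := congrFun (congrArg DFunLike.coe hM) (0, Pi.single j 1)
    simpa [ContinuousLinearMap.sum_apply, ContinuousLinearMap.flip_apply,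
      smul_eq_mul] using h
  have hXS : ∀ m : Fin 3,
      fderiv ℝ (fderiv ℝ (uncurry S)) (t, x) (1, 0) (0, Pi.single m 1)
        + ∑ k, u t x k *
            fderiv ℝ (fderiv ℝ (uncurry S)) (t, x) (0, Pi.single k 1) (0, Pi.single m 1)
      = -∑ k : Fin 3, fderiv ℝ (uncurry fun a b => u a b k) (t, x) (0, Pi.single m 1)
          * fderiv ℝ (uncurry S) (t, x) (0, Pi.single k 1) := by
    intro m
    have h := hEnt m
    simp only [Fin.sum_univ_three] at h ⊢
    linear_combination h + hsym ((1 : ℝ), (0 : Fin 3 → ℝ)) (0, Pi.single m 1)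
      + u t x 0 * hsym ((0 : ℝ), Pi.single (0 : Fin 3) 1) (0, Pi.single m 1)
      + u t x 1 * hsym ((0 : ℝ), Pi.single (1 : Fin 3) 1) (0, Pi.single m 1)
      + u t x 2 * hsym ((0 : ℝ), Pi.single (2 : Fin 3) 1) (0, Pi.single m 1)
  -- smoothness of the flux function g
  have hginv : ContDiff ℝ (⊤ : ℕ∞) (fun q : ℝ × (Fin 3 → ℝ) => (uncurry ρ q)⁻¹) :=
    hρ.inv hρne
  have hgk : ∀ k : Fin 3, ContDiff ℝ (⊤ : ℕ∞)
      (fun q : ℝ × (Fin 3 → ℝ) => fderiv ℝ (uncurry S) q (0, Pi.single k 1)) :=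
    fun k => hF1.clm_apply contDiff_const
  have hg : ContDiff ℝ (⊤ : ℕ∞) (fun q : ℝ × (Fin 3 → ℝ) => ∑ k : Fin 3,
      (uncurry ρ q)⁻¹ * B q.1 q.2 k * fderiv ℝ (uncurry S) q (0, Pi.single k 1)) :=
    ContDiff.sum fun k _ => ((hginv.mul (hcb k)).mul (hgk k))
  have hgd : Differentiable ℝ (fun q : ℝ × (Fin 3 → ℝ) => ∑ k : Fin 3,
      (uncurry ρ q)⁻¹ * B q.1 q.2 k * fderiv ℝ (uncurry S) q (0, Pi.single k 1)) :=
    hg.differentiable (by simp)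
  -- derivative of 1/ρ
  have hinv : HasFDerivAt (fun q : ℝ × (Fin 3 → ℝ) => (uncurry ρ q)⁻¹)
      ((-(ρ t x ^ 2)⁻¹) • fderiv ℝ (uncurry ρ) (t, x)) (t, x) :=
    (hasDerivAt_inv (hρpos t x).ne').comp_hasFDerivAt (t, x) (hρd (t, x)).hasFDerivAt
  -- derivative of each term of g
  have hterm : ∀ k : Fin 3, HasFDerivAt
      (fun q : ℝ × (Fin 3 → ℝ) =>
        (uncurry ρ q)⁻¹ * B q.1 q.2 k * fderiv ℝ (uncurry S) q (0, Pi.single k 1))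
      ((((ρ t x)⁻¹ * B t x k) •
          ((fderiv ℝ (fderiv ℝ (uncurry S)) (t, x)).flip (0, Pi.single k 1)))
        + (fderiv ℝ (uncurry S) (t, x) (0, Pi.single k 1)) •
          (((ρ t x)⁻¹ • fderiv ℝ (uncurry fun a b => B a b k) (t, x))
            + (B t x k) • ((-(ρ t x ^ 2)⁻¹) • fderiv ℝ (uncurry ρ) (t, x)))) (t, x) :=
    fun k => (hinv.mul ((hbd k) (t, x)).hasFDerivAt).mul (hclm (0, Pi.single k 1))
  have hgder : ∀ v : ℝ × (Fin 3 → ℝ),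
      fderiv ℝ (fun q : ℝ × (Fin 3 → ℝ) => ∑ k : Fin 3,
        (uncurry ρ q)⁻¹ * B q.1 q.2 k * fderiv ℝ (uncurry S) q (0, Pi.single k 1)) (t, x) v
      = ∑ k : Fin 3,
          ((ρ t x)⁻¹ * B t x k
              * fderiv ℝ (fderiv ℝ (uncurry S)) (t, x) v (0, Pi.single k 1)
            + fderiv ℝ (uncurry S) (t, x) (0, Pi.single k 1) *
              ((ρ t x)⁻¹ * fderiv ℝ (uncurry fun a b => B a b k) (t, x) v
                + B t x k * (-(ρ t x ^ 2)⁻¹ * fderiv ℝ (uncurry ρ) (t, x) v))) := by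
    intro v
    have h := (HasFDerivAt.fun_sum (u := (Finset.univ : Finset (Fin 3)))
      (fun k _ => hterm k)).fderiv
    rw [h]
    simp only [ContinuousLinearMap.sum_apply, ContinuousLinearMap.add_apply,
      ContinuousLinearMap.smul_apply, ContinuousLinearMap.flip_apply, smul_eq_mul]
  -- identify the goal with derivatives of g
  have hfg : uncurry (fun t x => ∑ k, (ρ t x)⁻¹ * B t x k * pd k S t x)
      = fun q : ℝ × (Fin 3 → ℝ) => ∑ k : Fin 3,
          (uncurry ρ q)⁻¹ * B q.1 q.2 k * fderiv ℝ (uncurry S) q (0, Pi.single k 1) := by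
    funext q
    show (∑ k : Fin 3, (ρ q.1 q.2)⁻¹ * B q.1 q.2 k * pd k S q.1 q.2) = _
    refine Finset.sum_congr rfl fun k _ => ?_
    rw [pd_eq k S q.1 q.2 (hSd _)]
    rfl
  have hdif : DifferentiableAt ℝ
      (uncurry (fun t x => ∑ k, (ρ t x)⁻¹ * B t x k * pd k S t x)) (t, x) := by
    rw [hfg]; exact hgd (t, x)
  have h1 : pt (fun t x => ∑ k, (ρ t x)⁻¹ * B t x k * pd k S t x) t x
      = fderiv ℝ (fun q : ℝ × (Fin 3 → ℝ) => ∑ k : Fin 3,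
          (uncurry ρ q)⁻¹ * B q.1 q.2 k * fderiv ℝ (uncurry S) q (0, Pi.single k 1))
        (t, x) (1, 0) := by
    rw [pt_eq _ t x hdif, hfg]
  have h2 : ∀ k : Fin 3, pd k (fun t x => ∑ k, (ρ t x)⁻¹ * B t x k * pd k S t x) t x
      = fderiv ℝ (fun q : ℝ × (Fin 3 → ℝ) => ∑ k : Fin 3,
          (uncurry ρ q)⁻¹ * B q.1 q.2 k * fderiv ℝ (uncurry S) q (0, Pi.single k 1))
        (t, x) (0, Pi.single k 1) := by
    intro k
    rw [pd_eq k _ t x hdif, hfg]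
  rw [Dt, h1]
  simp only [h2, hgder]
  have hr : (ρ t x)⁻¹ * ρ t x = 1 := inv_mul_cancel₀ (hρpos t x).ne'
  simp only [Fin.sum_univ_three] at hXρ ⊢
  have hXB0 := hXB 0; have hXB1 := hXB 1; have hXB2 := hXB 2
  have hXS0 := hXS 0; have hXS1 := hXS 1; have hXS2 := hXS 2
  simp only [Fin.sum_univ_three] at hXB0 hXB1 hXB2 hXS0 hXS1 hXS2
  linear_combination
    ((B t x 0 * fderiv ℝ (uncurry S) (t, x) (0, Pi.single 0 1)
      + B t x 1 * fderiv ℝ (uncurry S) (t, x) (0, Pi.single 1 1)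
      + B t x 2 * fderiv ℝ (uncurry S) (t, x) (0, Pi.single 2 1))
        * (-(ρ t x ^ 2)⁻¹)) * hXρ
    + ((ρ t x)⁻¹ * fderiv ℝ (uncurry S) (t, x) (0, Pi.single 0 1)) * hXB0
    + ((ρ t x)⁻¹ * fderiv ℝ (uncurry S) (t, x) (0, Pi.single 1 1)) * hXB1
    + ((ρ t x)⁻¹ * fderiv ℝ (uncurry S) (t, x) (0, Pi.single 2 1)) * hXB2
    + ((ρ t x)⁻¹ * B t x 0) * hXS0
    + ((ρ t x)⁻¹ * B t x 1) * hXS1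
    + ((ρ t x)⁻¹ * B t x 2) * hXS2
    + ((ρ t x)⁻¹
        * (B t x 0 * fderiv ℝ (uncurry S) (t, x) (0, Pi.single 0 1)
          + B t x 1 * fderiv ℝ (uncurry S) (t, x) (0, Pi.single 1 1)
          + B t x 2 * fderiv ℝ (uncurry S) (t, x) (0, Pi.single 2 1))
        * (fderiv ℝ (uncurry fun a b => u a b 0) (t, x) (0, Pi.single 0 1)
          + fderiv ℝ (uncurry fun a b => u a b 1) (t, x) (0, Pi.single 1 1)
          + fderiv ℝ (uncurry fun a b => u a b 2) (t, x) (0, Pi.single 2 1))) * hr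
end
end

section
/- Let E : [0,T] → [0,∞) be continuous and suppose E(t) ≤ C₀ + C₁ P(E(t)) ∫₀ᵗ P(E(τ)) dτ for all t ∈ [0,T], where P is a polynomial with nonnegative coefficients and C₀, C₁ ≥ 0, with E(0) ≤ C₀. Then there exists T' ∈ (0,T], depending only on C₀, C₁ and P (not on any other parameter), such that sup_{t∈[0,T']} E(t) ≤ 2C₀ + 1. -/
open MeasureTheory Filter Topology

lemma poly_eval_nonneg (P : Polynomial ℝ) (hP : ∀ n, 0 ≤ P.coeff n)
    {x : ℝ} (hx : 0 ≤ x) : 0 ≤ P.eval x := by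
  rw [Polynomial.eval_eq_sum_range]
  exact Finset.sum_nonneg fun i _ => mul_nonneg (hP i) (pow_nonneg hx i)

lemma poly_eval_mono (P : Polynomial ℝ) (hP : ∀ n, 0 ≤ P.coeff n)
    {x y : ℝ} (hx : 0 ≤ x) (hxy : x ≤ y) : P.eval x ≤ P.eval y := by
  rw [Polynomial.eval_eq_sum_range, Polynomial.eval_eq_sum_range]
  exact Finset.sum_le_sum fun i _ =>
    mul_le_mul_of_nonneg_left (pow_le_pow_left₀ hx hxy i) (hP i)

/-- **abstract Grönwall/bootstrap.** If a continuous nonnegative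
energy satisfies `E(t) ≤ C₀ + C₁ P(E(t)) ∫₀ᵗ P(E(τ)) dτ` on `[0,T]` with
`E(0) ≤ C₀`, where `P` is a polynomial with nonnegative coefficients, then
there exists a time `δ > 0` depending only on `C₀, C₁, P` such that
`E(t) ≤ 2C₀ + 1` on `[0, min δ T]`. -/
theorem gronwall_bootstrap
    (C₀ C₁ : ℝ) (hC₀ : 0 ≤ C₀) (hC₁ : 0 ≤ C₁)
    (P : Polynomial ℝ) (hP : ∀ n, 0 ≤ P.coeff n) :
    ∃ δ > 0, ∀ (T : ℝ), 0 < T → ∀ E : ℝ → ℝ,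
      ContinuousOn E (Set.Icc 0 T) →
      (∀ t ∈ Set.Icc 0 T, 0 ≤ E t) →
      (∀ t ∈ Set.Icc 0 T,
        E t ≤ C₀ + C₁ * P.eval (E t) * ∫ τ in (0:ℝ)..t, P.eval (E τ)) →
      E 0 ≤ C₀ →
      ∀ t ∈ Set.Icc 0 (min δ T), E t ≤ 2 * C₀ + 1 := by
  set M : ℝ := P.eval (2 * C₀ + 1) with hM
  have hMnn : 0 ≤ M := poly_eval_nonneg P hP (by linarith)
  refine ⟨1 / (2 * (C₁ * M ^ 2 + 1)), by positivity, ?_⟩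
  set δ : ℝ := 1 / (2 * (C₁ * M ^ 2 + 1)) with hδ
  have hδpos : 0 < δ := by positivity
  intro T hT E hcont hnn hineq hE0
  by_contra hcon
  push_neg at hcon
  obtain ⟨t₁, ht₁, ht₁E⟩ := hcon
  set T' : ℝ := min δ T with hT'
  have hT'pos : 0 < T' := lt_min hδpos hT
  have hsub : Set.Icc (0:ℝ) T' ⊆ Set.Icc 0 T :=
    Set.Icc_subset_Icc le_rfl (min_le_right _ _)
  set A : Set ℝ := Set.Icc 0 T' ∩ E ⁻¹' Set.Ici (2 * C₀ + 1) with hA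
  have hAne : A.Nonempty := ⟨t₁, ht₁, le_of_lt ht₁E⟩
  have hAbdd : BddBelow A := ⟨0, fun x hx => hx.1.1⟩
  have hAclosed : IsClosed A := by
    apply (hcont.mono hsub).preimage_isClosed_of_isClosed isClosed_Icc isClosed_Ici
  have ht₀mem : sInf A ∈ A := hAclosed.csInf_mem hAne hAbdd
  set t₀ : ℝ := sInf A with ht₀
  have ht₀Icc : t₀ ∈ Set.Icc (0:ℝ) T' := ht₀mem.1
  have ht₀E : 2 * C₀ + 1 ≤ E t₀ := ht₀mem.2
  have ht₀pos : 0 < t₀ := by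
    rcases lt_or_eq_of_le ht₀Icc.1 with h | h
    · exact h
    · exfalso; rw [← h] at ht₀E; linarith
  -- For s < t₀ in [0, T'], E s < 2C₀+1
  have hbelow : ∀ s ∈ Set.Ico (0:ℝ) t₀, E s ≤ 2 * C₀ + 1 := by
    intro s hs
    by_contra h
    push_neg at h
    have hsA : s ∈ A := ⟨⟨hs.1, le_trans hs.2.le ht₀Icc.2⟩, le_of_lt h⟩
    exact absurd (csInf_le hAbdd hsA) (not_le.mpr hs.2)
  -- E t₀ ≤ 2C₀+1 by left continuity
  have ht₀le : E t₀ ≤ 2 * C₀ + 1 := by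
    have hcw : ContinuousWithinAt E (Set.Ico 0 t₀) t₀ := by
      apply (hcont t₀ (hsub ht₀Icc)).mono
      exact fun x hx => hsub ⟨hx.1, le_trans hx.2.le ht₀Icc.2⟩
    have hne : (𝓝[Set.Ico (0:ℝ) t₀] t₀).NeBot := by
      rw [nhdsWithin_Ico_eq_nhdsLT ht₀pos]
      infer_instance
    exact le_of_tendsto hcw (eventually_nhdsWithin_of_forall hbelow)
  have hEle : ∀ s ∈ Set.Icc (0:ℝ) t₀, E s ≤ 2 * C₀ + 1 := by
    intro s hs
    rcases lt_or_eq_of_le hs.2 with h | h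
    · exact hbelow s ⟨hs.1, h⟩
    · rw [h]; exact ht₀le
  have hsub2 : Set.Icc (0:ℝ) t₀ ⊆ Set.Icc 0 T :=
    fun x hx => hsub ⟨hx.1, le_trans hx.2 ht₀Icc.2⟩
  -- bound the integral
  have hPEcont : ContinuousOn (fun τ => P.eval (E τ)) (Set.Icc 0 t₀) :=
    P.continuous.comp_continuousOn (hcont.mono hsub2)
  have hint : IntervalIntegrable (fun τ => P.eval (E τ)) volume 0 t₀ := by
    apply ContinuousOn.intervalIntegrable
    rwa [Set.uIcc_of_le ht₀pos.le]
  have hintle : (∫ τ in (0:ℝ)..t₀, P.eval (E τ)) ≤ t₀ * M := by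
    have := intervalIntegral.integral_mono_on ht₀pos.le hint
      (intervalIntegrable_const (c := M)) (fun x hx =>
        poly_eval_mono P hP (hnn x (hsub2 hx)) (hEle x hx))
    simpa [mul_comm] using this
  have hintnn : 0 ≤ ∫ τ in (0:ℝ)..t₀, P.eval (E τ) := by
    apply intervalIntegral.integral_nonneg ht₀pos.le
    intro x hx
    exact poly_eval_nonneg P hP (hnn x (hsub2 hx))
  have hPEt₀ : P.eval (E t₀) ≤ M :=
    poly_eval_mono P hP (hnn t₀ (hsub ht₀Icc)) ht₀le
  have hPEt₀nn : 0 ≤ P.eval (E t₀) := poly_eval_nonneg P hP (hnn t₀ (hsub ht₀Icc))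
  have hkey := hineq t₀ (hsub ht₀Icc)
  have ht₀δ : t₀ ≤ δ := le_trans ht₀Icc.2 (min_le_left _ _)
  have h1 : C₁ * P.eval (E t₀) * (∫ τ in (0:ℝ)..t₀, P.eval (E τ)) ≤ C₁ * M * (δ * M) := by
    have h2 : (∫ τ in (0:ℝ)..t₀, P.eval (E τ)) ≤ δ * M :=
      le_trans hintle (mul_le_mul_of_nonneg_right ht₀δ hMnn)
    have := mul_le_mul (mul_le_mul_of_nonneg_left hPEt₀ hC₁) h2 hintnn
      (mul_nonneg hC₁ hMnn)
    exact this
  have hδle : C₁ * M * (δ * M) ≤ 1 / 2 := by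
    have h4 : (C₁ * M ^ 2 + 1) * δ = 1 / 2 := by
      rw [hδ]; field_simp
    nlinarith [hδpos.le, hC₁, hMnn]
  linarith
end
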